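/- arXiv:math/0610358 — 2 statements merged into one kernel-verified Lean document; each statement's English description precedes it below -/
import Mathlib

section
/- For all positive integers r and s with gcd(r,s) = 1 and rs > 1, the mean value M(c*(·,r) c*(·,s)) of the function n ↦ c*(n,r) c*(n,s) exists and equals 0. -/
/-!
With `ζ = exp(2πi/(rs))`, the product `c*(n,r) c*(n,s)` is a finite sum of geometric sequences
`(ζ^(ks + lr))^n` over `k`, `l` with `(k,r)_U = (l,s)_U = 1`. As `gcd(r,s) = 1`, the ratio
`ζ^(ks + lr)` can only be `1` if `r ∣ k` and `s ∣ l`, that is `k = r` and `l = s`; since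
`(r,r)_U = r` this forces `r = s = 1`. So every ratio is a root of unity different from `1`,
the partial sums of the product are bounded, and its mean value vanishes.
-/

open Finset Filter Topology

/-- The unitary gcd `(n,r)_U`: the largest `d` with `d ∣ n`, `d ∣ r` and `gcd(d, r/d) = 1`. -/
def unitaryGcd (n r : ℕ) : ℕ :=
  (r.divisors.filter (fun d => d ∣ n ∧ Nat.Coprime d (r / d))).sup id

/-- The unitary Ramanujan sum `c*(n,r) = ∑_{1 ≤ k ≤ r, (k,r)_U = 1} exp(2πikn/r)`. -/
noncomputable def unitaryRamanujanSum (n r : ℕ) : ℂ :=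
  ∑ k ∈ (Finset.Icc 1 r).filter (fun k => unitaryGcd k r = 1),
    Complex.exp (2 * Real.pi * Complex.I * k * n / r)

theorem unitaryGcd_self {r : ℕ} (hr : 0 < r) : unitaryGcd r r = r := by
  refine le_antisymm (Finset.sup_le fun d hd => ?_) (Finset.le_sup (f := id) ?_)
  · exact Nat.le_of_dvd hr (Nat.mem_divisors.mp (Finset.mem_filter.mp hd).1).1
  · simp [hr.ne', Nat.div_self hr]

def unitaryReducedResidues (r : ℕ) : Finset ℕ :=
  (Icc 1 r).filter (fun k => unitaryGcd k r = 1)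

theorem eq_one_of_mem_unitaryReducedResidues_of_dvd {k r : ℕ} (hk : k ∈ unitaryReducedResidues r)
    (hrk : r ∣ k) : r = 1 := by
  obtain ⟨hk, hkr⟩ := mem_filter.mp hk
  rw [mem_Icc] at hk
  obtain rfl : k = r := le_antisymm hk.2 (Nat.le_of_dvd hk.1 hrk)
  rwa [unitaryGcd_self hk.1] at hkr

theorem Nat.Coprime.dvd_and_dvd_of_mul_dvd_add {r s k l : ℕ} (hrs : r.Coprime s)
    (h : r * s ∣ k * s + l * r) : r ∣ k ∧ s ∣ l := by
  constructor
  · have : r ∣ k * s + l * r := (Nat.dvd_mul_right r s).trans h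
    exact hrs.dvd_of_dvd_mul_right <| (Nat.dvd_add_left (Nat.dvd_mul_left r l)).mp this
  · have : s ∣ k * s + l * r := (Nat.dvd_mul_left s r).trans h
    exact hrs.symm.dvd_of_dvd_mul_right <| (Nat.dvd_add_right (Nat.dvd_mul_left s k)).mp this

theorem norm_sum_Icc_pow_le {𝕜 : Type*} [NormedField 𝕜] {q : 𝕜} (hq1 : ‖q‖ ≤ 1) (hq : q ≠ 1)
    (N : ℕ) : ‖∑ n ∈ Icc 1 N, q ^ n‖ ≤ 2 / ‖q - 1‖ := by
  have hsum : ∑ n ∈ Icc 1 N, q ^ n = q * ((q ^ N - 1) / (q - 1)) := by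
    rw [← Ico_add_one_right_eq_Icc, sum_Ico_eq_sum_range, ← geom_sum_eq hq, mul_sum]
    simp only [Nat.add_sub_cancel, pow_add, pow_one]
  have hqN : ‖q ^ N - 1‖ ≤ 2 := calc
    ‖q ^ N - 1‖ ≤ ‖q‖ ^ N + ‖(1 : 𝕜)‖ := by rw [← norm_pow]; exact norm_sub_le _ _
    _ ≤ 2 := by rw [norm_one]; linarith [pow_le_one₀ (n := N) (norm_nonneg q) hq1]
  rw [hsum, norm_mul, norm_div]
  calc ‖q‖ * (‖q ^ N - 1‖ / ‖q - 1‖) ≤ 1 * (2 / ‖q - 1‖) := by gcongr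
    _ = 2 / ‖q - 1‖ := one_mul _

theorem exists_bound_norm_sum_Icc_sum_pow {𝕜 ι : Type*} [NormedField 𝕜] (s : Finset ι)
    (q : ι → 𝕜) (hq1 : ∀ i ∈ s, ‖q i‖ ≤ 1) (hq : ∀ i ∈ s, q i ≠ 1) :
    ∃ C, ∀ N, ‖∑ n ∈ Icc 1 N, ∑ i ∈ s, q i ^ n‖ ≤ C := by
  refine ⟨∑ i ∈ s, 2 / ‖q i - 1‖, fun N => ?_⟩
  rw [sum_comm]
  exact (norm_sum_le _ _).trans <| sum_le_sum fun i hi => norm_sum_Icc_pow_le (hq1 i hi) (hq i hi) N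

theorem tendsto_sum_Icc_floor_div_atTop_zero {f : ℕ → ℂ}
    (hf : ∃ C, ∀ N, ‖∑ n ∈ Icc 1 N, f n‖ ≤ C) :
    Tendsto (fun x : ℝ => (∑ n ∈ Icc 1 ⌊x⌋₊, f n) / (x : ℂ)) atTop (𝓝 0) := by
  obtain ⟨C, hC⟩ := hf
  refine squeeze_zero_norm' ?_ ((tendsto_const_nhds (x := C)).div_atTop tendsto_id)
  filter_upwards [eventually_gt_atTop 0] with x hx
  rw [norm_div, Complex.norm_real, Real.norm_of_nonneg hx.le]
  exact div_le_div_of_nonneg_right (hC _) hx.le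

theorem unitaryRamanujanSum_mul_eq_sum_pow (n : ℕ) {r s : ℕ} (hr : r ≠ 0) (hs : s ≠ 0) :
    unitaryRamanujanSum n r * unitaryRamanujanSum n s =
      ∑ kl ∈ unitaryReducedResidues r ×ˢ unitaryReducedResidues s,
        (Complex.exp (2 * Real.pi * Complex.I / (r * s : ℕ)) ^ (kl.1 * s + kl.2 * r)) ^ n := by
  rw [unitaryRamanujanSum, unitaryRamanujanSum, sum_mul_sum, ← sum_product']
  refine sum_congr rfl fun kl _ => ?_
  rw [← pow_mul, ← Complex.exp_nat_mul, ← Complex.exp_add]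
  congr 1
  push_cast
  field_simp

theorem unitaryRamanujanSum_coprime_orthogonal_general (r s : ℕ)
    (hrs : Nat.gcd r s = 1) (h1 : 1 < r * s) :
    Tendsto
      (fun x : ℝ =>
        (∑ n ∈ Finset.Icc 1 ⌊x⌋₊, unitaryRamanujanSum n r * unitaryRamanujanSum n s) / (x : ℂ))
      atTop (𝓝 0) := by
  have hrs0 : r * s ≠ 0 := by omega
  have hζ := Complex.isPrimitiveRoot_exp (r * s) hrs0
  simp only [unitaryRamanujanSum_mul_eq_sum_pow _ (left_ne_zero_of_mul hrs0)
    (right_ne_zero_of_mul hrs0)]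
  refine tendsto_sum_Icc_floor_div_atTop_zero <| exists_bound_norm_sum_Icc_sum_pow _ _
    (fun _ _ => by rw [norm_pow, hζ.norm'_eq_one hrs0, one_pow]) fun kl hkl hq => ?_
  obtain ⟨hk, hl⟩ := mem_product.mp hkl
  obtain ⟨hrk, hsl⟩ := Nat.Coprime.dvd_and_dvd_of_mul_dvd_add hrs ((hζ.pow_eq_one_iff_dvd _).mp hq)
  rw [eq_one_of_mem_unitaryReducedResidues_of_dvd hk hrk,
    eq_one_of_mem_unitaryReducedResidues_of_dvd hl hsl] at h1
  exact h1.false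

/-- For coprime `r, s` with `rs > 1`, the mean value of `n ↦ c*(n,r) c*(n,s)` exists
and equals `0`. -/
theorem unitaryRamanujanSum_coprime_orthogonal (r s : ℕ) (hr : 0 < r) (hs : 0 < s)
    (hrs : Nat.gcd r s = 1) (h1 : 1 < r * s) :
    Tendsto
      (fun x : ℝ =>
        (∑ n ∈ Finset.Icc 1 ⌊x⌋₊, unitaryRamanujanSum n r * unitaryRamanujanSum n s) / (x : ℂ))
      atTop (𝓝 0) :=
  unitaryRamanujanSum_coprime_orthogonal_general r s hrs h1
end

section
/- For every prime p, the mean value M(c*(·,p) c*(·,p²)) of the function n ↦ c*(n,p) c*(n,p²) exists and equals p − 1; in particular there exist distinct positive integers r ≠ s with M(c*(·,r) c*(·,s)) ≠ 0, so the orthogonality relations fail for the unitary Ramanujan sums. -/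
/-!
For a prime power `r = p ^ k` the only unitary divisors of `r` are `1` and `r`, so
`(m, r)_U = 1` exactly when `r ∤ m`, and `c*(n, r)` is the full sum of the `r`-th roots of unity
`e(mn/r)` minus its term `m = r`: `c*(n, p ^ k) = p ^ k [p ^ k ∣ n] - 1`. Hence
`c*(n, p) c*(n, p²) = 1 - p [p ∣ n] + (p³ - p²) [p² ∣ n]`, and since `[d ∣ n]` has mean value
`1 / d`, the product has mean value `1 - 1 + (p - 1) = p - 1 ≠ 0`.
-/

open Finset Filter Topology

theorem unitaryGcd_eq_one_iff {m r : ℕ} (hr : r ≠ 0) :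
    unitaryGcd m r = 1 ↔ ∀ d, d ∣ r → d ∣ m → Nat.Coprime d (r / d) → d = 1 := by
  have h_one_mem : 1 ∈ r.divisors.filter (fun d => d ∣ m ∧ Nat.Coprime d (r / d)) := by
    simp [hr]
  rw [unitaryGcd, le_antisymm_iff,
    and_iff_left (show 1 ≤ _ from Finset.le_sup (f := id) h_one_mem), Finset.sup_le_iff]
  refine forall_congr' fun d => ?_
  simp only [mem_filter, Nat.mem_divisors, id_eq, and_imp]
  constructor
  · intro h hdr hdm hcop
    have : d ≠ 0 := ne_zero_of_dvd_ne_zero hr hdr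
    have := h hdr hr hdm hcop
    omega
  · intro h hdr _ hdm hcop
    exact (h hdr hdm hcop).le

theorem unitaryGcd_prime_pow_eq_one_iff {p k : ℕ} (hp : p.Prime) (hk : k ≠ 0) (m : ℕ) :
    unitaryGcd m (p ^ k) = 1 ↔ ¬ p ^ k ∣ m := by
  rw [unitaryGcd_eq_one_iff (pow_ne_zero k hp.ne_zero)]
  constructor
  · intro h hdvd
    refine (Nat.one_lt_pow hk hp.one_lt).ne' (h _ dvd_rfl hdvd ?_)
    simp [Nat.div_self (pow_pos hp.pos k)]
  · rintro hnd d hd hdm hcop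
    obtain ⟨i, hik, rfl⟩ := (Nat.dvd_prime_pow hp).1 hd
    obtain rfl | hi := Nat.eq_zero_or_pos i
    · exact pow_zero p
    obtain rfl | hik := hik.eq_or_lt
    · exact absurd hdm hnd
    rw [Nat.pow_div hik.le hp.pos, Nat.coprime_pow_left_iff hi,
      Nat.coprime_pow_right_iff (by omega), Nat.coprime_self] at hcop
    exact absurd hcop hp.ne_one

theorem sum_Icc_one_pow_of_pow_eq_one {K : Type*} [Field K] [DecidableEq K] {x : K} {r : ℕ}
    (hx : x ^ r = 1) : ∑ k ∈ Icc 1 r, x ^ k = if x = 1 then (r : K) else 0 := by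
  have h_shift : ∑ k ∈ Icc 1 r, x ^ k = ∑ k ∈ range r, x ^ k := by
    have h := sum_range_succ (fun k => x ^ k) r
    rw [range_eq_Ico, sum_eq_sum_Ico_succ_bot (by omega : 0 < r + 1), zero_add,
      Ico_add_one_right_eq_Icc, hx, pow_zero, add_comm] at h
    exact add_right_cancel h
  split_ifs with h1
  · simp [h1]
  · rw [h_shift, geom_sum_eq h1, hx, sub_self, zero_div]

theorem sum_Icc_exp_eq_ite {r : ℕ} (hr : r ≠ 0) (n : ℕ) :
    ∑ k ∈ Icc 1 r, Complex.exp (2 * Real.pi * Complex.I * k * n / r)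
      = if r ∣ n then (r : ℂ) else 0 := by
  set ζ := Complex.exp (2 * Real.pi * Complex.I / r)
  have hζ : IsPrimitiveRoot ζ r := Complex.isPrimitiveRoot_exp r hr
  have h_term (k : ℕ) : Complex.exp (2 * Real.pi * Complex.I * k * n / r) = (ζ ^ n) ^ k := by
    rw [← pow_mul, ← Complex.exp_nat_mul]
    push_cast
    ring_nf
  have h_pow : (ζ ^ n) ^ r = 1 := by rw [← pow_mul, mul_comm, pow_mul, hζ.pow_eq_one, one_pow]
  simp only [h_term, sum_Icc_one_pow_of_pow_eq_one h_pow, hζ.pow_eq_one_iff_dvd]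

theorem unitaryRamanujanSum_prime_pow {p k : ℕ} (hp : p.Prime) (hk : k ≠ 0) (n : ℕ) :
    unitaryRamanujanSum n (p ^ k) = (if p ^ k ∣ n then (p ^ k : ℂ) else 0) - 1 := by
  have hr : p ^ k ≠ 0 := pow_ne_zero k hp.ne_zero
  have h_units : (Icc 1 (p ^ k)).filter (fun m => unitaryGcd m (p ^ k) = 1)
      = (Icc 1 (p ^ k)).erase (p ^ k) := by
    ext m
    simp only [mem_filter, mem_erase, mem_Icc, unitaryGcd_prime_pow_eq_one_iff hp hk]
    constructor
    · rintro ⟨hm, hnd⟩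
      exact ⟨fun h => hnd (h ▸ dvd_rfl), hm⟩
    · rintro ⟨hne, hm⟩
      exact ⟨hm, fun hd => hne (le_antisymm hm.2 (Nat.le_of_dvd hm.1 hd))⟩
  have h_top : Complex.exp (2 * Real.pi * Complex.I * (p ^ k : ℕ) * n / (p ^ k : ℕ)) = 1 := by
    rw [mul_div_right_comm, mul_div_cancel_right₀ _ (Nat.cast_ne_zero.2 hr)]
    exact Complex.exp_eq_one_iff.2 ⟨n, by push_cast; ring⟩
  have h_mem : p ^ k ∈ Icc 1 (p ^ k) := mem_Icc.2 ⟨Nat.one_le_iff_ne_zero.2 hr, le_rfl⟩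
  rw [unitaryRamanujanSum, h_units, sum_erase_eq_sub h_mem, sum_Icc_exp_eq_ite hr, h_top]
  push_cast
  rfl

def HasMeanValue (f : ℕ → ℂ) (L : ℂ) : Prop :=
  Tendsto (fun x : ℝ => (∑ n ∈ Icc 1 ⌊x⌋₊, f n) / (x : ℂ)) atTop (𝓝 L)

namespace HasMeanValue

variable {f g : ℕ → ℂ} {L M : ℂ}

theorem add (hf : HasMeanValue f L) (hg : HasMeanValue g M) :
    HasMeanValue (fun n => f n + g n) (L + M) := by
  refine (Tendsto.add hf hg).congr fun x => ?_
  simp only [sum_add_distrib, add_div]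

theorem sub (hf : HasMeanValue f L) (hg : HasMeanValue g M) :
    HasMeanValue (fun n => f n - g n) (L - M) := by
  refine (Tendsto.sub hf hg).congr fun x => ?_
  simp only [sum_sub_distrib, sub_div]

theorem const_mul (c : ℂ) (hf : HasMeanValue f L) : HasMeanValue (fun n => c * f n) (c * L) := by
  refine (Tendsto.const_mul c hf).congr fun x => ?_
  simp only [← mul_sum, mul_div_assoc]

end HasMeanValue

theorem hasMeanValue_indicator_dvd {d : ℕ} (hd : 0 < d) :
    HasMeanValue (fun n => if d ∣ n then 1 else 0) (1 / d) := by
  have hd' : (0 : ℝ) < d := Nat.cast_pos.2 hd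
  have h_real : Tendsto (fun x : ℝ => (⌊x / d⌋₊ : ℝ) / x) atTop (𝓝 (1 / d)) := by
    have h := (tendsto_nat_floor_div_atTop.comp (tendsto_id.atTop_div_const hd')).div_const
      (d : ℝ)
    refine h.congr' ?_
    filter_upwards [eventually_gt_atTop 0] with x hx
    simp only [Function.comp_apply, id_eq]
    field_simp
  have h_count (x : ℝ) : ∑ n ∈ Icc 1 ⌊x⌋₊, (if d ∣ n then (1 : ℂ) else 0) = (⌊x / d⌋₊ : ℂ) := by
    rw [sum_boole, show Icc 1 ⌊x⌋₊ = Ioc 0 ⌊x⌋₊ from Icc_add_one_left_eq_Ioc 0 _,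
      Nat.Ioc_filter_dvd_card_eq_div, Nat.floor_div_natCast]
  have h := (Complex.continuous_ofReal.tendsto _).comp h_real
  push_cast at h
  refine h.congr fun x => ?_
  simp only [Function.comp_apply, h_count]
  push_cast
  rfl

theorem hasMeanValue_one : HasMeanValue (fun _ => 1) 1 := by
  simpa using hasMeanValue_indicator_dvd one_pos

theorem unitaryRamanujanSum_prime_mul_prime_sq {p : ℕ} (hp : p.Prime) (n : ℕ) :
    unitaryRamanujanSum n p * unitaryRamanujanSum n (p ^ 2)
      = 1 - p * (if p ∣ n then 1 else 0)
        + ((p : ℂ) ^ 3 - p ^ 2) * (if p ^ 2 ∣ n then 1 else 0) := by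
  have h_p := unitaryRamanujanSum_prime_pow hp one_ne_zero n
  rw [pow_one, pow_one] at h_p
  rw [h_p, unitaryRamanujanSum_prime_pow hp two_ne_zero]
  by_cases h_sq : p ^ 2 ∣ n
  · have h_dvd : p ∣ n := (dvd_pow_self p two_ne_zero).trans h_sq
    simp only [h_dvd, h_sq, if_true]
    ring
  · by_cases h_dvd : p ∣ n <;> simp only [h_dvd, h_sq, if_true, if_false] <;> ring

theorem hasMeanValue_unitaryRamanujanSum_prime_mul_prime_sq {p : ℕ} (hp : p.Prime) :
    HasMeanValue (fun n => unitaryRamanujanSum n p * unitaryRamanujanSum n (p ^ 2)) (p - 1) := by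
  have h := (hasMeanValue_one.sub ((hasMeanValue_indicator_dvd hp.pos).const_mul p)).add
    ((hasMeanValue_indicator_dvd (pow_pos hp.pos 2)).const_mul ((p : ℂ) ^ 3 - p ^ 2))
  have hp0 : (p : ℂ) ≠ 0 := Nat.cast_ne_zero.2 hp.ne_zero
  convert h using 1
  · exact funext (unitaryRamanujanSum_prime_mul_prime_sq hp)
  · push_cast
    field_simp
    ring

/-- For every prime `p`, the mean value of `n ↦ c*(n,p) c*(n,p²)` exists and equals `p − 1`;
in particular there exist distinct positive integers `r ≠ s` whose unitary Ramanujan sums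
are not orthogonal in mean. -/
theorem unitaryRamanujanSum_orthogonality_fails (p : ℕ) (hp : p.Prime) :
    Tendsto
      (fun x : ℝ =>
        (∑ n ∈ Finset.Icc 1 ⌊x⌋₊,
          unitaryRamanujanSum n p * unitaryRamanujanSum n (p ^ 2)) / (x : ℂ))
      atTop (𝓝 ((p : ℂ) - 1)) ∧
    ∃ r s : ℕ, 0 < r ∧ 0 < s ∧ r ≠ s ∧ ∃ L : ℂ, L ≠ 0 ∧
      Tendsto
        (fun x : ℝ =>
          (∑ n ∈ Finset.Icc 1 ⌊x⌋₊,
            unitaryRamanujanSum n r * unitaryRamanujanSum n s) / (x : ℂ))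
        atTop (𝓝 L) := by
  have h_mean := hasMeanValue_unitaryRamanujanSum_prime_mul_prime_sq hp
  have h_ne : p ≠ p ^ 2 := (lt_self_pow₀ hp.one_lt one_lt_two).ne
  have h_limit_ne : (p : ℂ) - 1 ≠ 0 := sub_ne_zero.2 (Nat.cast_ne_one.2 hp.ne_one)
  exact ⟨h_mean, p, p ^ 2, hp.pos, pow_pos hp.pos 2, h_ne, p - 1, h_limit_ne, h_mean⟩
end
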